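/- Let C be a permutation-invariant partition of the player set of a finite normal-form game with identical interests. The ω-limit set of every solution of the joint CT-ECFP differential inclusion q̇ ∈ BR(q̄) − q is a connected subset of MCE along which the function V(p) = (1/n) ∑_{i=1}^n U(p_i, p̄_{-i}) is constant. -/

import Mathlib

open MeasureTheory Filter Topology

noncomputable section

namespace ECFP

variable {ι A κ : Type*}

/-- The mixed-strategy simplex over a finite action set `Y` inside the action universe `A`. -/
def simplex (Y : Finset A) : Set (A → ℝ) :=
  {p | (∀ a, 0 ≤ p a) ∧ (∀ a, a ∉ Y → p a = 0) ∧ ∑ a ∈ Y, p a = 1}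

/-- The space `Δⁿ` of joint mixed strategies. -/
def Delta (Y : ι → Finset A) : Set (ι → A → ℝ) :=
  {p | ∀ i, p i ∈ simplex (Y i)}

variable [Fintype ι] [DecidableEq ι] [Fintype A] [DecidableEq κ]

/-- The mixed extension of the common utility `u`:
`U(p₁,…,pₙ) = ∑_y u(y) p₁(y₁)⋯pₙ(yₙ)`. -/
def U (u : (ι → A) → ℝ) (p : ι → A → ℝ) : ℝ :=
  ∑ y : ι → A, u y * ∏ i, p i (y i)

/-- The `ε`-best-response set of player `i` against the joint strategy `p`
(only the components `p_{-i}` matter, since player `i`'s component is overwritten):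
`{pᵢ ∈ Δᵢ : U(pᵢ,p_{-i}) ≥ U(qᵢ,p_{-i}) - ε  ∀ qᵢ ∈ Δᵢ}`. -/
def BRi (Y : ι → Finset A) (u : (ι → A) → ℝ) (ε : ℝ) (p : ι → A → ℝ) (i : ι) :
    Set (A → ℝ) :=
  {pi | pi ∈ simplex (Y i) ∧
    ∀ qi ∈ simplex (Y i),
      U u (Function.update p i pi) ≥ U u (Function.update p i qi) - ε}

/-- The joint `ε`-best-response set `BR^ε(p) = (BR₁^ε(p_{-1}),…,BRₙ^ε(p_{-n}))`. -/
def BR (Y : ι → Finset A) (u : (ι → A) → ℝ) (ε : ℝ) (p : ι → A → ℝ) :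
    Set (ι → A → ℝ) :=
  {b | ∀ i, b i ∈ BRi Y u ε p i}

/-- The profile obtained from `y` by swapping the strategies of players `i` and `j`. -/
def swapStrat (y : ι → A) (i j : ι) : ι → A :=
  Function.update (Function.update y i (y j)) j (y i)

/-- `cls : ι → κ` encodes a permutation-invariant partition of the player set (the classes
are the fibers of `cls`): players in the same class have the same action set, and the utility
is invariant under swapping the strategies of two same-class players in any strategy profile. -/
def PermInvariant (Y : ι → Finset A) (u : (ι → A) → ℝ) (cls : ι → κ) : Prop :=
  ∀ i j : ι, cls i = cls j →
    Y i = Y j ∧ ∀ y : ι → A, (∀ k, y k ∈ Y k) → u (swapStrat y i j) = u y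

/-- The equivalence class (as a finset of players) of player `i`. -/
def cluster (cls : ι → κ) (i : ι) : Finset ι :=
  Finset.univ.filter (fun j => cls j = cls i)

/-- The centroid distribution `p̄`: player `i` is assigned the average of the strategies of
the players in `i`'s class. -/
def centroid (cls : ι → κ) (p : ι → A → ℝ) : ι → A → ℝ :=
  fun i => ((cluster cls i).card : ℝ)⁻¹ • ∑ j ∈ cluster cls i, p j

/-- A joint strategy is class-constant if same-class players use identical strategies. -/
def classConst (cls : ι → κ) (p : ι → A → ℝ) : Prop :=
  ∀ i j, cls i = cls j → p i = p j

/-- The set of Nash equilibria. -/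
def NE (Y : ι → Finset A) (u : (ι → A) → ℝ) : Set (ι → A → ℝ) :=
  {p | p ∈ Delta Y ∧ ∀ i, ∀ qi ∈ simplex (Y i),
    U u (Function.update p i qi) ≤ U u p}

/-- The set of symmetric Nash equilibria relative to the partition `cls`. -/
def SNE (Y : ι → Finset A) (u : (ι → A) → ℝ) (cls : ι → κ) : Set (ι → A → ℝ) :=
  {p | p ∈ NE Y u ∧ classConst cls p}

/-- The set of mean-centric equilibria relative to the partition `cls`:
`U(pᵢ, p̄_{-i}) ≥ U(pᵢ', p̄_{-i})` for all `pᵢ' ∈ Δᵢ` and all `i`. -/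
def MCE (Y : ι → Finset A) (u : (ι → A) → ℝ) (cls : ι → κ) : Set (ι → A → ℝ) :=
  {p | p ∈ Delta Y ∧ ∀ i, ∀ qi ∈ simplex (Y i),
    U u (Function.update (centroid cls p) i qi)
      ≤ U u (Function.update (centroid cls p) i (p i))}

/-- `V(p) = (1/n) ∑ᵢ U(pᵢ, p̄_{-i})`. -/
def Vfun (u : (ι → A) → ℝ) (cls : ι → κ) (p : ι → A → ℝ) : ℝ :=
  (Fintype.card ι : ℝ)⁻¹ * ∑ i, U u (Function.update (centroid cls p) i (p i))

/-- A discrete-time ECFP process w.r.t. `(Γ, 𝒞)`: `q(1) = a(1)`,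
`q(t+1) = q(t) + γₜ (a(t+1) − q(t))` and `a(t+1) ∈ BR^{εₜ}(q̄(t))` for all `t`
(time is indexed by `ℕ`, i.e. `t = 0` plays the role of `t = 1` in the paper). -/
structure IsECFP (Y : ι → Finset A) (u : (ι → A) → ℝ) (cls : ι → κ)
    (γ ε : ℕ → ℝ) (a q : ℕ → ι → A → ℝ) : Prop where
  a_init_mem : a 0 ∈ Delta Y
  q_mem : ∀ t, q t ∈ Delta Y
  init : q 0 = a 0
  step : ∀ t, q (t + 1) = q t + γ t • (a (t + 1) - q t)
  br : ∀ t, a (t + 1) ∈ BR Y u (ε t) (centroid cls (q t))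

/-- A solution of the differential inclusion `ẋ ∈ F(x)` taking values in `Δⁿ`:
an everywhere-`Δⁿ`-valued trajectory on `[0,∞)` which is the integral of a locally
integrable selection `g(t) ∈ F(x(t))` (a.e.). -/
def IsSolution (Y : ι → Finset A) (F : (ι → A → ℝ) → Set (ι → A → ℝ))
    (x : ℝ → ι → A → ℝ) : Prop :=
  (∀ t : ℝ, 0 ≤ t → x t ∈ Delta Y) ∧
  ∃ g : ℝ → ι → A → ℝ,
    LocallyIntegrableOn g (Set.Ici (0 : ℝ)) ∧
    (∀ᵐ t ∂(volume.restrict (Set.Ici (0 : ℝ))), g t ∈ F (x t)) ∧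
    ∀ t : ℝ, 0 ≤ t → x t = x 0 + ∫ s in Set.Ioc (0 : ℝ) t, g s

/-- Right-hand side of the joint CT-ECFP differential inclusion `q̇ ∈ BR(q̄) − q`. -/
def Fjoint (Y : ι → Finset A) (u : (ι → A) → ℝ) (cls : ι → κ)
    (q : ι → A → ℝ) : Set (ι → A → ℝ) :=
  (fun b => b - q) '' BR Y u 0 (centroid cls q)

/-- Right-hand side of the centroid CT-ECFP differential inclusion `ẏ ∈ BR(y) − y`. -/
def Fcent (Y : ι → Finset A) (u : (ι → A) → ℝ)
    (y : ι → A → ℝ) : Set (ι → A → ℝ) :=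
  (fun b => b - y) '' BR Y u 0 y

/-- The ω-limit set of a continuous-time trajectory: all limits of sequences
`x(t_k)` with `t_k → ∞`. -/
def omegaLimitSet (x : ℝ → ι → A → ℝ) : Set (ι → A → ℝ) :=
  {p | ∃ tk : ℕ → ℝ, Tendsto tk atTop atTop ∧ Tendsto (fun k => x (tk k)) atTop (𝓝 p)}

/-- The set of limit points of a (discrete-time) sequence. -/
def seqLimitPoints (q : ℕ → ι → A → ℝ) : Set (ι → A → ℝ) :=
  {p | ∃ φ : ℕ → ℕ, StrictMono φ ∧ Tendsto (fun k => q (φ k)) atTop (𝓝 p)}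

/-- A compact set `X ⊆ Δⁿ` is internally chain transitive for the inclusion `ẋ ∈ F(x)`:
any two points of `X` can be joined, for every `ε > 0` and `T > 0`, by finitely many
solution pieces of duration `> T` staying in `X`, with jumps of size `≤ ε`. -/
def InternallyChainTransitive (Y : ι → Finset A)
    (F : (ι → A → ℝ) → Set (ι → A → ℝ)) (X : Set (ι → A → ℝ)) : Prop :=
  IsCompact X ∧ X ⊆ Delta Y ∧
  ∀ ξ ∈ X, ∀ η ∈ X, ∀ ε : ℝ, 0 < ε → ∀ T : ℝ, 0 < T →
    ∃ k : ℕ, 0 < k ∧ ∃ x : ℕ → ℝ → ι → A → ℝ, ∃ tt : ℕ → ℝ,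
      (∀ i < k, IsSolution Y F (x i)) ∧
      (∀ i < k, T < tt i) ∧
      (∀ i < k, ∀ s : ℝ, 0 ≤ s → s ≤ tt i → x i s ∈ X) ∧
      (∀ i, i + 1 < k → ‖x i (tt i) - x (i + 1) 0‖ ≤ ε) ∧
      ‖x 0 0 - ξ‖ ≤ ε ∧ ‖x (k - 1) (tt (k - 1)) - η‖ ≤ ε

/-!
Along a solution `q`, the potential `U(q̄)` is nondecreasing. Solutions are 1-Lipschitz, so
`t ↦ U(q̄(t))` is absolutely continuous, and where `q̇ = b − q` with `b ∈ BR(q̄)`, multilinearity of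
`U` and the permutation invariance (which lets each player of a class stand in for the others
against the class-constant profile `q̄`) turn its derivative into the total gain from unilateral
deviations at `q̄`, `∑ᵢ (maxᵢ U(·, q̄₋ᵢ) − U(q̄))`, which is nonnegative and continuous in `q`.
Being bounded, `U(q̄(t))` converges, so this gain vanishes on the ω-limit set, which is exactly
the MCE condition; moreover `V(p) = U(p̄)` there, and it equals the limit. The ω-limit set is
connected as the decreasing intersection of the compact connected sets `closure (q [n, ∞))`.
-/

theorem isPreconnected_iInter_of_antitone {X : Type*} [TopologicalSpace X] [T2Space X]
    {K : ℕ → Set X} (hanti : Antitone K) (hcomp : ∀ n, IsCompact (K n))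
    (hconn : ∀ n, IsPreconnected (K n)) : IsPreconnected (⋂ n, K n) := by
  have hS : IsCompact (⋂ n, K n) := (hcomp 0).of_isClosed_subset
    (isClosed_iInter fun n => (hcomp n).isClosed) (Set.iInter_subset K 0)
  refine (isPreconnected_iff_subset_of_fully_disjoint_closed hS.isClosed).2
    fun u v hu hv huv hdisj => ?_
  obtain ⟨U, V, hU, hV, huU, hvV, hUV⟩ := SeparatedNhds.of_isCompact_isCompact
    (hS.inter_right hu) (hS.inter_right hv)
    (hdisj.mono Set.inter_subset_right Set.inter_subset_right)
  have hSUV : ⋂ n, K n ⊆ U ∪ V := fun z hz =>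
    (huv hz).imp (fun h => huU ⟨hz, h⟩) (fun h => hvV ⟨hz, h⟩)
  obtain ⟨n, hn⟩ := exists_subset_nhds_of_isCompact hanti.directed_ge hcomp
    fun z hz => (hU.union hV).mem_nhds (hSUV hz)
  rcases (hconn n).subset_or_subset hU hV hUV hn with hKU | hKV
  · refine .inl fun z hz => (huv hz).resolve_right fun hzv => ?_
    exact Set.disjoint_left.1 hUV (hKU (Set.iInter_subset K n hz)) (hvV ⟨hz, hzv⟩)
  · refine .inr fun z hz => (huv hz).resolve_left fun hzu => ?_
    exact Set.disjoint_left.1 hUV (huU ⟨hz, hzu⟩) (hKV (Set.iInter_subset K n hz))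

theorem exists_tendsto_of_monotoneOn_Ici {h : ℝ → ℝ} (hmono : MonotoneOn h (Set.Ici 0))
    (hbdd : BddAbove (h '' Set.Ici 0)) : ∃ L, Tendsto h atTop (𝓝 L) :=
  ⟨_, tendsto_comp_val_Ici_atTop.1 <| tendsto_atTop_ciSup (fun s t hst => hmono s.2 t.2 hst)
    (by rwa [← Set.image_eq_range])⟩

section Primitive

open Set

variable {E : Type*} [NormedAddCommGroup E] {x g : ℝ → E}

theorem _root_.MeasureTheory.LocallyIntegrableOn.intervalIntegrable_of_nonneg
    (hg : LocallyIntegrableOn g (Ici 0)) {s t : ℝ} (hs : 0 ≤ s) (ht : 0 ≤ t) : IntervalIntegrable g volume s t :=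
  (hg.integrableOn_compact_subset (fun _ hr => le_trans (le_min hs ht) hr.1) isCompact_uIcc)
    |>.intervalIntegrable

theorem sub_eq_intervalIntegral_of_eq_integral [NormedSpace ℝ E]
    (hg : LocallyIntegrableOn g (Ici 0))
    (hx : ∀ t, 0 ≤ t → x t = x 0 + ∫ r in Ioc 0 t, g r) {s t : ℝ} (hs : 0 ≤ s) (ht : 0 ≤ t) :
    x t - x s = ∫ r in s..t, g r := by
  rw [hx t ht, hx s hs, ← intervalIntegral.integral_of_le ht, ← intervalIntegral.integral_of_le hs,
    add_sub_add_left_eq_sub, intervalIntegral.integral_interval_sub_left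
      (hg.intervalIntegrable_of_nonneg le_rfl ht) (hg.intervalIntegrable_of_nonneg le_rfl hs)]

theorem ae_hasDerivAt_of_eq_integral [NormedSpace ℝ E] [CompleteSpace E]
    (hg : LocallyIntegrableOn g (Ici 0))
    (hx : ∀ t, 0 ≤ t → x t = x 0 + ∫ r in Ioc 0 t, g r) : ∀ᵐ t, 0 < t → HasDerivAt x (g t) t := by
  have hderiv : ∀ n : ℕ, ∀ᵐ t, t ∈ uIcc 0 (n : ℝ) → ∀ c ∈ uIcc 0 (n : ℝ),
      HasDerivAt (fun s => ∫ r in c..s, g r) (g t) t :=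
    fun n => (hg.intervalIntegrable_of_nonneg le_rfl n.cast_nonneg).ae_hasDerivAt_integral
  filter_upwards [ae_all_iff.2 hderiv] with t ht ht0
  obtain ⟨n, hn⟩ := exists_nat_gt t
  have hmem : t ∈ uIcc 0 (n : ℝ) := by rw [uIcc_of_le n.cast_nonneg]; exact ⟨ht0.le, hn.le⟩
  refine ((ht n hmem t hmem).const_add (x t)).congr_of_eventuallyEq ?_
  filter_upwards [Ioi_mem_nhds ht0] with s hs
  rw [← sub_eq_intervalIntegral_of_eq_integral hg hx ht0.le (le_of_lt hs), add_sub_cancel]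

theorem lipschitzOnWith_of_eq_integral [NormedSpace ℝ E] (hg : LocallyIntegrableOn g (Ici 0))
    (hx : ∀ t, 0 ≤ t → x t = x 0 + ∫ r in Ioc 0 t, g r) {K : NNReal}
    (hK : ∀ᵐ t ∂volume.restrict (Ici 0), ‖g t‖ ≤ K) : LipschitzOnWith K x (Ici 0) := by
  refine LipschitzOnWith.of_dist_le_mul fun t ht s hs => ?_
  rw [dist_eq_norm (x t), sub_eq_intervalIntegral_of_eq_integral hg hx hs ht, Real.dist_eq]
  refine intervalIntegral.norm_integral_le_of_norm_le_const_ae (E := E) ?_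
  filter_upwards [(ae_restrict_iff' measurableSet_Ici).1 hK] with r hr hrI
  exact hr (le_trans (le_min hs ht) (le_of_lt hrI.1))

end Primitive

section Simplex

variable {α : Type*} {Y₀ : Finset α}

theorem nonempty_of_mem_simplex {q : α → ℝ} (hq : q ∈ simplex Y₀) : Y₀.Nonempty :=
  Finset.nonempty_of_sum_ne_zero (hq.2.2 ▸ one_ne_zero)

theorem single_mem_simplex [DecidableEq α] {a : α} (ha : a ∈ Y₀) :
    Pi.single a (1 : ℝ) ∈ simplex Y₀ := by
  refine ⟨fun b => ?_, fun b hb => Pi.single_eq_of_ne (by rintro rfl; exact hb ha) _, ?_⟩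
  · rw [Pi.single_apply]
    split <;> norm_num
  · rw [Finset.sum_pi_single' a 1, if_pos ha]

theorem eq_sum_single_of_mem_simplex [DecidableEq α] {q : α → ℝ} (hq : q ∈ simplex Y₀) :
    q = ∑ a ∈ Y₀, q a • Pi.single a (1 : ℝ) := by
  funext b
  simp only [Finset.sum_apply, Pi.smul_apply, Pi.single_apply, smul_eq_mul, mul_ite, mul_one,
    mul_zero, Finset.sum_ite_eq]
  split_ifs with hb
  · rfl
  · exact hq.2.1 b hb

theorem mem_Icc_of_mem_simplex {p : α → ℝ} (hp : p ∈ simplex Y₀) : p ∈ Set.Icc 0 1 := by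
  refine ⟨hp.1, fun a => ?_⟩
  by_cases ha : a ∈ Y₀
  · exact (Finset.single_le_sum (fun b _ => hp.1 b) ha).trans_eq hp.2.2
  · simp [hp.2.1 a ha]

theorem isClosed_simplex (Y₀ : Finset α) : IsClosed (simplex Y₀) := by
  simp only [simplex, Set.ofPred_and, Set.ofPred_forall]
  exact (isClosed_iInter fun a => isClosed_le continuous_const (continuous_apply a)).inter
    ((isClosed_iInter fun a => isClosed_iInter fun _ =>
      isClosed_eq (continuous_apply a) continuous_const).inter
    (isClosed_eq (continuous_finsetSum _ fun a _ => continuous_apply a) continuous_const))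

end Simplex

omit [Fintype ι] [DecidableEq ι] [Fintype A] in
theorem isCompact_Delta (Y : ι → Finset A) : IsCompact (Delta Y) := by
  have hDelta : Delta Y = Set.univ.pi fun i => simplex (Y i) := by ext; simp [Delta]
  exact hDelta ▸ isCompact_univ_pi fun i => isCompact_Icc.of_isClosed_subset (isClosed_simplex _)
    fun _ => mem_Icc_of_mem_simplex

omit [DecidableEq ι] in
theorem norm_sub_le_one_of_mem_Delta {Y : ι → Finset A} {p q : ι → A → ℝ} (hp : p ∈ Delta Y)
    (hq : q ∈ Delta Y) : ‖p - q‖ ≤ 1 := by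
  refine (pi_norm_le_iff_of_nonneg zero_le_one).2 fun i =>
    (pi_norm_le_iff_of_nonneg zero_le_one).2 fun a => ?_
  have hp0 : 0 ≤ p i a := (mem_Icc_of_mem_simplex (hp i)).1 a
  have hp1 : p i a ≤ 1 := (mem_Icc_of_mem_simplex (hp i)).2 a
  have hq0 : 0 ≤ q i a := (mem_Icc_of_mem_simplex (hq i)).1 a
  have hq1 : q i a ≤ 1 := (mem_Icc_of_mem_simplex (hq i)).2 a
  rw [Pi.sub_apply, Pi.sub_apply, Real.norm_eq_abs, abs_le]
  constructor <;> linarith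

section Utility

variable (u : (ι → A) → ℝ)

theorem U_update (p : ι → A → ℝ) (i : ι) (v : A → ℝ) :
    U u (Function.update p i v)
      = ∑ y : ι → A, u y * (v (y i) * ∏ j ∈ Finset.univ.erase i, p j (y j)) := by
  refine Finset.sum_congr rfl fun y _ => ?_
  rw [← Finset.mul_prod_erase _ _ (Finset.mem_univ i), Function.update_self]
  congr 2
  exact Finset.prod_congr rfl fun j hj => by rw [Function.update_of_ne (Finset.ne_of_mem_erase hj)]

def deviationU (p : ι → A → ℝ) (i : ι) : (A → ℝ) →ₗ[ℝ] ℝ where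
  toFun v := U u (Function.update p i v)
  map_add' v w := by
    simp only [U_update, Pi.add_apply, add_mul, mul_add, Finset.sum_add_distrib]
  map_smul' c v := by
    simp only [U_update, Pi.smul_apply, smul_eq_mul, RingHom.id_apply, Finset.mul_sum]
    exact Finset.sum_congr rfl fun y _ => by ring

theorem deviationU_apply (p : ι → A → ℝ) (i : ι) (v : A → ℝ) :
    deviationU u p i v = U u (Function.update p i v) := rfl

theorem U_comp_perm {Y : ι → Finset A} (σ : Equiv.Perm ι)
    (hu : ∀ y : ι → A, (∀ k, y k ∈ Y k) → u (y ∘ σ) = u y) {p : ι → A → ℝ}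
    (hp : ∀ k, ∀ a ∉ Y k, p k a = 0) :
    U u (p ∘ σ) = U u p := by
  refine Fintype.sum_equiv (σ.arrowCongr (Equiv.refl A)) _ _ fun y => ?_
  have hy : (σ.arrowCongr (Equiv.refl A)) y = y ∘ σ.symm := rfl
  have hprod : ∏ k, (p ∘ σ) k (y k) = ∏ k, p k (y (σ.symm k)) :=
    Fintype.prod_equiv σ _ _ fun k => by simp
  rw [hy, hprod]
  by_cases hmem : ∀ k, y (σ.symm k) ∈ Y k
  · have hinv : (y ∘ σ.symm) ∘ σ = y := by ext; simp
    rw [← hu (y ∘ σ.symm) hmem, hinv]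
    rfl
  · obtain ⟨k, hk⟩ := not_forall.1 hmem
    have hzero : ∏ k, p k (y (σ.symm k)) = 0 := Finset.prod_eq_zero (Finset.mem_univ k) (hp k _ hk)
    simp only [Function.comp_apply, hzero, mul_zero]

theorem continuous_U : Continuous (U u) := by
  unfold U
  fun_prop

theorem hasDerivAt_U {p : ℝ → ι → A → ℝ} {p' : ι → A → ℝ} {t : ℝ}
    (hp : HasDerivAt p p' t) :
    HasDerivAt (fun s => U u (p s)) (∑ i, U u (Function.update (p t) i (p' i))) t := by
  have hcoord : ∀ i a, HasDerivAt (fun s => p s i a) (p' i a) t :=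
    fun i a => hasDerivAt_pi.1 (hasDerivAt_pi.1 hp i) a
  have hsum := HasDerivAt.fun_sum (u := Finset.univ) fun (y : ι → A) _ =>
    (HasDerivAt.fun_finsetProd (u := Finset.univ) fun i _ => hcoord i (y i)).const_mul (u y)
  refine hsum.congr_deriv ?_
  simp only [U_update, Finset.mul_sum, smul_eq_mul]
  rw [Finset.sum_comm]
  exact Finset.sum_congr rfl fun y _ => Finset.sum_congr rfl fun i _ => by ring

omit [DecidableEq ι] in
theorem hasDerivAt_centroid (cls : ι → κ) {p : ℝ → ι → A → ℝ} {p' : ι → A → ℝ} {t : ℝ}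
    (hp : HasDerivAt p p' t) : HasDerivAt (fun s => centroid cls (p s)) (centroid cls p') t := by
  refine hasDerivAt_pi.2 fun i => ?_
  have hsum : HasDerivAt (fun s => ∑ j ∈ cluster cls i, p s j) (∑ j ∈ cluster cls i, p' j) t :=
    HasDerivAt.fun_sum fun j _ => hasDerivAt_pi.1 hp j
  exact hsum.const_smul ((cluster cls i).card : ℝ)⁻¹

omit [DecidableEq ι] in
theorem contDiff_centroid (cls : ι → κ) {n : WithTop ℕ∞} :
    ContDiff ℝ n (centroid cls : (ι → A → ℝ) → ι → A → ℝ) :=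
  contDiff_pi.2 fun _ => (ContDiff.sum fun j _ => contDiff_apply ℝ (A → ℝ) j).const_smul _

omit [DecidableEq ι] in
theorem continuous_centroid (cls : ι → κ) :
    Continuous (centroid cls : (ι → A → ℝ) → ι → A → ℝ) :=
  (contDiff_centroid cls (n := 0)).continuous

theorem contDiff_U_centroid (cls : ι → κ) :
    ContDiff ℝ 1 (fun q : ι → A → ℝ => U u (centroid cls q)) := by
  have hU : ContDiff ℝ 1 (U u) :=
    ContDiff.sum fun y _ => contDiff_const.mul <| contDiff_prod fun i _ =>
      (contDiff_apply ℝ ℝ (y i)).comp (contDiff_apply ℝ (A → ℝ) i)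
  exact hU.comp (contDiff_centroid cls)

end Utility

omit [Fintype ι] [Fintype A] in
theorem swapStrat_eq_comp (y : ι → A) (i j : ι) : swapStrat y i j = y ∘ Equiv.swap i j := by
  funext k
  simp only [swapStrat, Function.update_apply, Function.comp_apply, Equiv.swap_apply_def]
  split_ifs <;> simp_all

section Classes

variable {Y : ι → Finset A} {u : (ι → A) → ℝ} {cls : ι → κ}

omit [DecidableEq κ] in
theorem U_update_swap (hpi : PermInvariant Y u cls) {i j : ι} (hij : cls i = cls j)
    {p : ι → A → ℝ} (hp : p ∈ Delta Y) (hpij : p i = p j) {v : A → ℝ}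
    (hv : ∀ a ∉ Y i, v a = 0) :
    U u (Function.update p i v) = U u (Function.update p j v) := by
  have hcomp : Function.update p j v = Function.update p i v ∘ Equiv.swap i j := by
    funext k
    simp only [Function.comp_apply, Function.update_apply, Equiv.swap_apply_def]
    split_ifs <;> simp_all
  rw [hcomp, U_comp_perm u _ (fun y hy => by rw [← swapStrat_eq_comp, (hpi i j hij).2 y hy])]
  intro k a ha
  rcases eq_or_ne k i with rfl | hk
  · simpa using hv a ha
  · simpa [Function.update_of_ne hk] using (hp k).2.1 a ha

omit [Fintype A] [DecidableEq ι] in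
theorem mem_cluster {i j : ι} : j ∈ cluster cls i ↔ cls j = cls i := by
  simp [cluster]

omit [Fintype A] [DecidableEq ι] in
theorem cluster_card_pos (i : ι) : 0 < (cluster cls i).card :=
  Finset.card_pos.2 ⟨i, mem_cluster.2 rfl⟩

omit [Fintype A] [DecidableEq ι] in
theorem cluster_eq_of_cls_eq {i j : ι} (hij : cls i = cls j) : cluster cls i = cluster cls j := by
  rw [cluster, cluster, hij]

omit [Fintype A] [DecidableEq ι] in
theorem sum_inv_card_mul_sum_cluster (F : ι → ℝ) :
    ∑ i, ((cluster cls i).card : ℝ)⁻¹ * ∑ j ∈ cluster cls i, F j = ∑ j, F j := by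
  calc ∑ i, ((cluster cls i).card : ℝ)⁻¹ * ∑ j ∈ cluster cls i, F j
      = ∑ i, ∑ j ∈ cluster cls i, ((cluster cls j).card : ℝ)⁻¹ * F j := by
        refine Finset.sum_congr rfl fun i _ => ?_
        rw [Finset.mul_sum]
        exact Finset.sum_congr rfl fun j hj => by rw [cluster_eq_of_cls_eq (mem_cluster.1 hj)]
    _ = ∑ j, ∑ i ∈ cluster cls j, ((cluster cls j).card : ℝ)⁻¹ * F j :=
        Finset.sum_comm' fun i j => by simp [mem_cluster, eq_comm]
    _ = ∑ j, F j := by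
        refine Finset.sum_congr rfl fun j _ => ?_
        rw [Finset.sum_const, nsmul_eq_mul, ← mul_assoc,
          mul_inv_cancel₀ (by exact_mod_cast (cluster_card_pos j).ne'), one_mul]

omit [Fintype A] [DecidableEq ι] in
theorem centroid_classConst (p : ι → A → ℝ) : classConst cls (centroid cls p) :=
  fun i j hij => by rw [centroid, centroid, cluster_eq_of_cls_eq hij]

omit [Fintype A] [DecidableEq ι] in
theorem centroid_sub (p q : ι → A → ℝ) :
    centroid cls (p - q) = centroid cls p - centroid cls q := by
  funext i
  simp only [centroid, Pi.sub_apply, Finset.sum_sub_distrib, smul_sub]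

omit [Fintype A] in
theorem centroid_mem_Delta (hpi : PermInvariant Y u cls) {p : ι → A → ℝ} (hp : p ∈ Delta Y) :
    centroid cls p ∈ Delta Y := by
  intro i
  have hY : ∀ j ∈ cluster cls i, Y j = Y i := fun j hj => (hpi j i (mem_cluster.1 hj)).1
  have hcard : (0 : ℝ) < (cluster cls i).card := by exact_mod_cast cluster_card_pos i
  have happly : ∀ a,
      centroid cls p i a = ((cluster cls i).card : ℝ)⁻¹ * ∑ j ∈ cluster cls i, p j a :=
    fun a => by simp [centroid, Finset.sum_apply]
  refine ⟨fun a => ?_, fun a ha => ?_, ?_⟩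
  · rw [happly]
    exact mul_nonneg (inv_nonneg.2 hcard.le) (Finset.sum_nonneg fun j _ => (hp j).1 a)
  · rw [happly, Finset.sum_eq_zero fun j hj => (hp j).2.1 a (by rwa [hY j hj]), mul_zero]
  · simp_rw [happly, ← Finset.mul_sum]
    rw [Finset.sum_comm, Finset.sum_congr rfl fun j hj =>
      (show ∑ a ∈ Y i, p j a = 1 by rw [← hY j hj]; exact (hp j).2.2), Finset.sum_const,
      nsmul_eq_mul, mul_one, inv_mul_cancel₀ hcard.ne']

theorem sum_U_update_centroid (hpi : PermInvariant Y u cls) {y : ι → A → ℝ} (hy : y ∈ Delta Y)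
    (hyc : classConst cls y) {w : ι → A → ℝ} (hw : w ∈ Delta Y) :
    ∑ i, U u (Function.update y i (centroid cls w i)) = ∑ i, U u (Function.update y i (w i)) := by
  calc ∑ i, U u (Function.update y i (centroid cls w i))
      = ∑ i, ((cluster cls i).card : ℝ)⁻¹
          * ∑ j ∈ cluster cls i, U u (Function.update y j (w j)) := by
        refine Finset.sum_congr rfl fun i _ => ?_
        simp only [centroid, ← deviationU_apply, map_smul, map_sum, smul_eq_mul]
        congr 1
        refine Finset.sum_congr rfl fun j hj => ?_
        have hij : cls i = cls j := (mem_cluster.1 hj).symm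
        exact U_update_swap hpi hij hy (hyc i j hij)
          fun a ha => (hw j).2.1 a (by rwa [← (hpi i j hij).1])
    _ = ∑ i, U u (Function.update y i (w i)) := sum_inv_card_mul_sum_cluster _

theorem Vfun_eq_U_centroid [Nonempty ι] (hpi : PermInvariant Y u cls) {p : ι → A → ℝ}
    (hp : p ∈ Delta Y) : Vfun u cls p = U u (centroid cls p) := by
  have hcard : (Fintype.card ι : ℝ) ≠ 0 := by exact_mod_cast Fintype.card_ne_zero
  rw [Vfun, ← sum_U_update_centroid hpi (centroid_mem_Delta hpi hp) (centroid_classConst p) hp]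
  simp only [Function.update_eq_self, Finset.sum_const, Finset.card_univ, nsmul_eq_mul]
  rw [inv_mul_cancel_left₀ hcard]

end Classes

section Gap

variable [DecidableEq A] {Y : ι → Finset A} {u : (ι → A) → ℝ} {cls : ι → κ}

def bestReplyValue (Y : ι → Finset A) (hY : ∀ i, (Y i).Nonempty) (u : (ι → A) → ℝ)
    (y : ι → A → ℝ) (i : ι) : ℝ :=
  (Y i).sup' (hY i) fun a => U u (Function.update y i (Pi.single a 1))

def nashGap (Y : ι → Finset A) (hY : ∀ i, (Y i).Nonempty) (u : (ι → A) → ℝ)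
    (y : ι → A → ℝ) : ℝ :=
  ∑ i, (bestReplyValue Y hY u y i - U u y)

variable {hY : ∀ i, (Y i).Nonempty}

theorem U_update_le_bestReplyValue {y : ι → A → ℝ} {i : ι} {q : A → ℝ}
    (hq : q ∈ simplex (Y i)) : U u (Function.update y i q) ≤ bestReplyValue Y hY u y i := by
  rw [← deviationU_apply, eq_sum_single_of_mem_simplex hq, map_sum]
  calc ∑ a ∈ Y i, deviationU u y i (q a • Pi.single a 1)
      ≤ ∑ a ∈ Y i, q a * bestReplyValue Y hY u y i := by
        refine Finset.sum_le_sum fun a ha => ?_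
        rw [map_smul, smul_eq_mul]
        exact mul_le_mul_of_nonneg_left
          (Finset.le_sup' (fun a => U u (Function.update y i (Pi.single a 1))) ha) (hq.1 a)
    _ = bestReplyValue Y hY u y i := by rw [← Finset.sum_mul, hq.2.2, one_mul]

theorem U_update_eq_bestReplyValue {y : ι → A → ℝ} {i : ι} {b : A → ℝ}
    (hb : b ∈ BRi Y u 0 y i) : U u (Function.update y i b) = bestReplyValue Y hY u y i := by
  refine (U_update_le_bestReplyValue hb.1).antisymm ?_
  obtain ⟨a, ha, hmax⟩ := Finset.exists_mem_eq_sup' (hY i)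
    fun a => U u (Function.update y i (Pi.single a 1))
  rw [bestReplyValue, hmax]
  simpa using hb.2 _ (single_mem_simplex ha)

theorem nashGap_nonneg {y : ι → A → ℝ} (hy : y ∈ Delta Y) : 0 ≤ nashGap Y hY u y :=
  Finset.sum_nonneg fun i _ => sub_nonneg.2 <| by
    simpa using U_update_le_bestReplyValue (hY := hY) (u := u) (y := y) (hy i)

theorem continuous_nashGap : Continuous (nashGap Y hY u) :=
  continuous_finsetSum _ fun i _ =>
    (Continuous.finset_sup'_apply (hY i) fun _ _ => (continuous_U u).comp
      (continuous_id.update i continuous_const)).sub (continuous_U u)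

theorem nashGap_centroid (hpi : PermInvariant Y u cls) {p : ι → A → ℝ} (hp : p ∈ Delta Y) :
    nashGap Y hY u (centroid cls p)
      = ∑ i, (bestReplyValue Y hY u (centroid cls p) i
          - U u (Function.update (centroid cls p) i (p i))) := by
  have hsum := sum_U_update_centroid hpi (centroid_mem_Delta hpi hp) (centroid_classConst p) hp
  simp only [Function.update_eq_self] at hsum
  rw [nashGap, Finset.sum_sub_distrib, Finset.sum_sub_distrib, hsum]

theorem mem_MCE_of_nashGap_centroid_eq_zero (hpi : PermInvariant Y u cls) {p : ι → A → ℝ}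
    (hp : p ∈ Delta Y) (h0 : nashGap Y hY u (centroid cls p) = 0) : p ∈ MCE Y u cls := by
  refine ⟨hp, fun i q hq => ?_⟩
  rw [nashGap_centroid hpi hp, Finset.sum_eq_zero_iff_of_nonneg fun k _ =>
    sub_nonneg.2 (U_update_le_bestReplyValue (hp k))] at h0
  linarith [h0 i (Finset.mem_univ i), U_update_le_bestReplyValue (hY := hY) (u := u)
    (y := centroid cls p) hq]

theorem sum_U_update_centroid_BR_sub (hpi : PermInvariant Y u cls) {q b : ι → A → ℝ}
    (hq : q ∈ Delta Y) (hb : b ∈ BR Y u 0 (centroid cls q)) :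
    ∑ i, U u (Function.update (centroid cls q) i (centroid cls (b - q) i))
      = nashGap Y hY u (centroid cls q) := by
  have hsum := sum_U_update_centroid hpi (centroid_mem_Delta hpi hq) (centroid_classConst q)
    fun i => (hb i).1
  have hdev : ∀ i, U u (Function.update (centroid cls q) i (centroid cls (b - q) i))
      = U u (Function.update (centroid cls q) i (centroid cls b i)) - U u (centroid cls q) :=
    fun i => by rw [centroid_sub, Pi.sub_apply, ← deviationU_apply, map_sub, deviationU_apply,
      deviationU_apply, Function.update_eq_self]
  rw [nashGap, Finset.sum_congr rfl fun i _ => hdev i, Finset.sum_sub_distrib,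
    Finset.sum_sub_distrib, hsum, Finset.sum_congr rfl fun i _ => U_update_eq_bestReplyValue (hb i)]

end Gap

section Solution

open Set

variable [DecidableEq A] {Y : ι → Finset A} {u : (ι → A) → ℝ} {cls : ι → κ}
  {x : ℝ → ι → A → ℝ}

omit [DecidableEq A] in
theorem IsSolution.lipschitzOnWith (hx : IsSolution Y (Fjoint Y u cls) x) :
    LipschitzOnWith 1 x (Ici 0) := by
  obtain ⟨hxΔ, g, hg, hgF, hxg⟩ := hx
  refine lipschitzOnWith_of_eq_integral hg hxg ?_
  filter_upwards [hgF, ae_restrict_mem measurableSet_Ici] with t ⟨b, hb, hbg⟩ ht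
  rw [← hbg]
  exact_mod_cast norm_sub_le_one_of_mem_Delta (fun i => (hb i).1) (hxΔ t ht)

theorem IsSolution.U_centroid_sub_eq_integral (hpi : PermInvariant Y u cls)
    (hY : ∀ i, (Y i).Nonempty) (hx : IsSolution Y (Fjoint Y u cls) x) {s t : ℝ} (hs : 0 ≤ s)
    (hst : s ≤ t) :
    U u (centroid cls (x t)) - U u (centroid cls (x s))
      = ∫ r in s..t, nashGap Y hY u (centroid cls (x r)) := by
  have hLip := hx.lipschitzOnWith
  obtain ⟨hxΔ, g, hg, hgF, hxg⟩ := hx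
  obtain ⟨K, hK⟩ := ((contDiff_U_centroid u cls).locallyLipschitz.locallyLipschitzOn
    (s := Delta Y)).exists_lipschitzOnWith_of_compact (isCompact_Delta Y)
  have hsub : uIcc s t ⊆ Ici 0 := fun r hr => hs.trans (uIcc_of_le hst ▸ hr).1
  have hAC : AbsolutelyContinuousOnInterval (fun r => U u (centroid cls (x r))) s t :=
    (hK.comp (hLip.mono hsub) fun r hr => hxΔ r (hsub hr)).absolutelyContinuousOnInterval
  rw [← hAC.integral_deriv_eq_sub]
  refine intervalIntegral.integral_congr_ae ?_
  filter_upwards [ae_hasDerivAt_of_eq_integral hg hxg,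
    (ae_restrict_iff' measurableSet_Ici).1 hgF] with r hderiv hF hr
  have hr0 : 0 < r := hs.trans_lt (uIoc_of_le hst ▸ hr).1
  obtain ⟨b, hb, hbg⟩ := hF hr0.le
  rw [((hasDerivAt_U u (hasDerivAt_centroid cls (hderiv hr0)))).deriv, ← hbg,
    sum_U_update_centroid_BR_sub hpi (hxΔ r hr0.le) hb]

theorem IsSolution.exists_tendsto_U_centroid (hpi : PermInvariant Y u cls)
    (hY : ∀ i, (Y i).Nonempty) (hx : IsSolution Y (Fjoint Y u cls) x) :
    ∃ L, Tendsto (fun t => U u (centroid cls (x t))) atTop (𝓝 L) := by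
  refine exists_tendsto_of_monotoneOn_Ici (fun s hs t _ hst => ?_) ?_
  · refine sub_nonneg.1 ((hx.U_centroid_sub_eq_integral hpi hY hs hst).symm ▸
      intervalIntegral.integral_nonneg hst fun r hr => nashGap_nonneg ?_)
    exact centroid_mem_Delta hpi (hx.1 r (le_trans hs hr.1))
  · refine ((isCompact_Delta Y).image (contDiff_U_centroid u cls).continuous).bddAbove.mono ?_
    rintro _ ⟨t, ht, rfl⟩
    exact ⟨x t, hx.1 t ht, rfl⟩

end Solution

section OmegaLimit

open Set

variable {x : ℝ → ι → A → ℝ}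

omit [DecidableEq ι] in
theorem omegaLimitSet_eq_iInter_closure :
    omegaLimitSet x = ⋂ n : ℕ, closure (x '' Ici (n : ℝ)) := by
  ext p
  simp only [mem_iInter]
  constructor
  · rintro ⟨tk, htk, hconv⟩ n
    refine mem_closure_of_tendsto hconv ?_
    filter_upwards [htk.eventually_ge_atTop (n : ℝ)] with k hk using ⟨tk k, hk, rfl⟩
  · intro hp
    have hnear : ∀ n : ℕ, ∃ t, (n : ℝ) ≤ t ∧ dist (x t) p < 1 / (n + 1) := fun n => by
      obtain ⟨_, ⟨t, ht, rfl⟩, hdist⟩ := Metric.mem_closure_iff.1 (hp n) _ Nat.one_div_pos_of_nat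
      exact ⟨t, ht, by rwa [dist_comm]⟩
    choose tk htk hdist using hnear
    refine ⟨tk, tendsto_atTop_mono htk tendsto_natCast_atTop_atTop, ?_⟩
    exact tendsto_iff_dist_tendsto_zero.2 <| squeeze_zero (fun _ => dist_nonneg)
      (fun n => (hdist n).le) tendsto_one_div_add_atTop_nhds_zero_nat

omit [Fintype ι] [DecidableEq ι] [Fintype A] in
theorem omegaLimitSet_subset {K : Set (ι → A → ℝ)} (hK : IsClosed K)
    (hxK : ∀ t, 0 ≤ t → x t ∈ K) : omegaLimitSet x ⊆ K :=
  fun _ ⟨_, htk, hconv⟩ => hK.mem_of_tendsto hconv <|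
    (htk.eventually_ge_atTop 0).mono fun _ hk => hxK _ hk

omit [DecidableEq ι] in
theorem isConnected_omegaLimitSet (hx : ContinuousOn x (Ici 0)) {K : Set (ι → A → ℝ)}
    (hK : IsCompact K) (hxK : ∀ t, 0 ≤ t → x t ∈ K) : IsConnected (omegaLimitSet x) := by
  have hsub : ∀ n : ℕ, closure (x '' Ici (n : ℝ)) ⊆ K := fun n =>
    closure_minimal (image_subset_iff.2 fun t ht => hxK t (n.cast_nonneg.trans ht)) hK.isClosed
  have hcomp : ∀ n : ℕ, IsCompact (closure (x '' Ici (n : ℝ))) :=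
    fun n => hK.of_isClosed_subset isClosed_closure (hsub n)
  have hanti : Antitone fun n : ℕ => closure (x '' Ici (n : ℝ)) :=
    fun m n hmn => closure_mono (image_mono (Ici_subset_Ici.2 (Nat.cast_le.2 hmn)))
  rw [omegaLimitSet_eq_iInter_closure]
  refine ⟨IsCompact.nonempty_iInter_of_sequence_nonempty_isCompact_isClosed _
    (fun n => hanti n.le_succ) (fun n => ⟨x n, subset_closure ⟨n, self_mem_Ici, rfl⟩⟩) (hcomp 0)
    fun n => isClosed_closure, isPreconnected_iInter_of_antitone hanti hcomp fun n => ?_⟩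
  exact (isConnected_Ici.image x (hx.mono (Ici_subset_Ici.2 n.cast_nonneg))).closure.isPreconnected

omit [Fintype ι] [DecidableEq ι] [Fintype A] in
theorem apply_eq_of_mem_omegaLimitSet {F : (ι → A → ℝ) → ℝ} (hF : Continuous F) {L : ℝ}
    (hL : Tendsto (fun t => F (x t)) atTop (𝓝 L)) {p : ι → A → ℝ} (hp : p ∈ omegaLimitSet x) :
    F p = L :=
  let ⟨_, htk, hconv⟩ := hp
  tendsto_nhds_unique ((hF.tendsto p).comp hconv) (hL.comp htk)

omit [DecidableEq ι] in
theorem nonpos_of_mem_omegaLimitSet {W : (ι → A → ℝ) → ℝ} (hW : Continuous W)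
    (hx : LipschitzOnWith 1 x (Ici 0)) {h : ℝ → ℝ}
    (hh : ∀ s t, 0 ≤ s → s ≤ t → h t - h s = ∫ r in s..t, W (x r)) {L : ℝ}
    (hL : Tendsto h atTop (𝓝 L)) {p : ι → A → ℝ} (hp : p ∈ omegaLimitSet x) : W p ≤ 0 := by
  by_contra! hWp
  obtain ⟨ρ, hρ, hball⟩ := Metric.eventually_nhds_iff.1
    (hW.continuousAt.eventually (lt_mem_nhds (half_lt_self hWp)))
  obtain ⟨tk, htk, hconv⟩ := hp
  have hgain : ∀ᶠ k in atTop, W p / 2 * (ρ / 2) ≤ h (tk k + ρ / 2) - h (tk k) := by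
    filter_upwards [htk.eventually_ge_atTop 0, hconv (Metric.ball_mem_nhds p (half_pos hρ))]
      with k hk0 hkp
    have hwindow : ∀ r ∈ Icc (tk k) (tk k + ρ / 2), W p / 2 ≤ W (x r) := fun r hr => by
      refine (hball ?_).le
      have hstep := hx.dist_le_mul r (hk0.trans hr.1) (tk k) hk0
      rw [NNReal.coe_one, one_mul, Real.dist_eq, abs_of_nonneg (sub_nonneg.2 hr.1)] at hstep
      linarith [dist_triangle (x r) (x (tk k)) p, Metric.mem_ball.1 hkp, hr.2]
    have hle : tk k ≤ tk k + ρ / 2 := by linarith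
    have hcont : ContinuousOn (fun r => W (x r)) (uIcc (tk k) (tk k + ρ / 2)) :=
      hW.comp_continuousOn (hx.continuousOn.mono fun r hr => hk0.trans (uIcc_of_le hle ▸ hr).1)
    rw [hh _ _ hk0 hle]
    calc W p / 2 * (ρ / 2) = ∫ _ in tk k..tk k + ρ / 2, W p / 2 := by simp; ring
      _ ≤ ∫ r in tk k..tk k + ρ / 2, W (x r) :=
        intervalIntegral.integral_mono_on hle intervalIntegrable_const
          hcont.intervalIntegrable hwindow
  have hvanish : Tendsto (fun k => h (tk k + ρ / 2) - h (tk k)) atTop (𝓝 0) := by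
    simpa using (hL.comp (tendsto_atTop_add_const_right _ _ htk)).sub (hL.comp htk)
  have := ge_of_tendsto hvanish hgain
  nlinarith

end OmegaLimit

variable [Nonempty ι]

theorem omegaLimit_of_joint_solution_general
    (Y : ι → Finset A) (u : (ι → A) → ℝ)
    (cls : ι → κ) (hpi : PermInvariant Y u cls)
    (x : ℝ → ι → A → ℝ) (hx : IsSolution Y (Fjoint Y u cls) x) :
    IsConnected (omegaLimitSet x) ∧ omegaLimitSet x ⊆ MCE Y u cls ∧
      ∀ p ∈ omegaLimitSet x, ∀ p' ∈ omegaLimitSet x, Vfun u cls p = Vfun u cls p' := by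
  classical
  have hY : ∀ i, (Y i).Nonempty := fun i => nonempty_of_mem_simplex (hx.1 0 le_rfl i)
  have hLip := hx.lipschitzOnWith
  have hωΔ : omegaLimitSet x ⊆ Delta Y := omegaLimitSet_subset (isCompact_Delta Y).isClosed hx.1
  obtain ⟨L, hL⟩ := hx.exists_tendsto_U_centroid hpi hY
  have hUL : ∀ p ∈ omegaLimitSet x, U u (centroid cls p) = L :=
    fun p hp => apply_eq_of_mem_omegaLimitSet (F := fun q => U u (centroid cls q))
      (contDiff_U_centroid u cls).continuous hL hp
  refine ⟨isConnected_omegaLimitSet hLip.continuousOn (isCompact_Delta Y) hx.1,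
    fun p hp => ?_, fun p hp p' hp' => ?_⟩
  · have hgap := nonpos_of_mem_omegaLimitSet
      ((continuous_nashGap (hY := hY)).comp (continuous_centroid cls)) hLip
      (fun s t hs hst => hx.U_centroid_sub_eq_integral hpi hY hs hst) hL hp
    exact mem_MCE_of_nashGap_centroid_eq_zero hpi (hωΔ hp)
      (hgap.antisymm (nashGap_nonneg (centroid_mem_Delta hpi (hωΔ hp))))
  · rw [Vfun_eq_U_centroid hpi (hωΔ hp), Vfun_eq_U_centroid hpi (hωΔ hp'), hUL p hp, hUL p' hp']

/-- **Proposition 1(ii).** The ω-limit set of every solution of the joint CT-ECFP inclusion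
`q̇ ∈ BR(q̄) − q` is a connected subset of MCE along which
`V(p) = (1/n) ∑ᵢ U(pᵢ, p̄_{-i})` is constant. -/
theorem omegaLimit_of_joint_solution
    (Y : ι → Finset A) (hY : ∀ i, (Y i).Nonempty) (u : (ι → A) → ℝ)
    (cls : ι → κ) (hpi : PermInvariant Y u cls)
    (x : ℝ → ι → A → ℝ) (hx : IsSolution Y (Fjoint Y u cls) x) :
    IsConnected (omegaLimitSet x) ∧ omegaLimitSet x ⊆ MCE Y u cls ∧
      ∀ p ∈ omegaLimitSet x, ∀ p' ∈ omegaLimitSet x, Vfun u cls p = Vfun u cls p' :=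
  omegaLimit_of_joint_solution_general Y u cls hpi x hx

end ECFP
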